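/- arXiv:2007.11111 — 4 statements merged into one kernel-verified Lean document; each statement's English description precedes it below -/
import Mathlib

section
/- For every finite simple graph G with adjacency matrix A and for all vertices i, j, the 3-path matrix satisfies P₃(i,j) = Σ_{k∈V} A(i,k)·P₂(k,j) − (deg(i) − 1)·A(i,j) − 2·t(i)·[i = j]. In matrix form: P₃ = A·P₂ − diag(p₁ − 1)·A − 2·diag(c₃), where p₁ is the degree vector and c₃(i) = t(i). -/
open Finset Matrix SimpleGraph

variable {V : Type*} [Fintype V] [DecidableEq V]

/-- The number of simple paths (walks with no repeated vertices) of length `ℓ`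
from `i` to `j` in `G` (`P_ℓ(i,j)`). -/
def pathCount (G : SimpleGraph V) [DecidableRel G.Adj] (ℓ : ℕ) (i j : V) : ℕ :=
  ((G.finsetWalkLength ℓ i j).filter fun w => w.IsPath).card

/-- The number of simple paths of length `ℓ` having `v` as an endpoint (`p_ℓ(v)`). -/
def pathEndCount (G : SimpleGraph V) [DecidableRel G.Adj] (ℓ : ℕ) (v : V) : ℕ :=
  ∑ j, pathCount G ℓ v j

/-- The number of triangles (3-cliques) of `G` containing the vertex `v` (`t(v)`). -/
def triCount (G : SimpleGraph V) [DecidableRel G.Adj] (v : V) : ℕ :=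
  ((G.cliqueFinset 3).filter fun s => v ∈ s).card

/-- The number of triangles (3-cliques) of `G` containing both `i` and `j` (`C₃(i,j)`). -/
def triPairCount (G : SimpleGraph V) [DecidableRel G.Adj] (i j : V) : ℕ :=
  ((G.cliqueFinset 3).filter fun s => i ∈ s ∧ j ∈ s).card

open scoped Classical in
/-- The number of cycle subgraphs of length `ℓ` of `G` passing through vertex `i`:
each (unoriented) cycle subgraph through `i` corresponds to exactly two closed walks
of length `ℓ` based at `i` that are cycles (one for each direction of traversal). -/
noncomputable def cycleVertexCount (G : SimpleGraph V) [DecidableRel G.Adj] (ℓ : ℕ) (i : V) : ℕ :=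
  ((G.finsetWalkLength ℓ i i).filter fun w => w.IsCycle).card / 2

open scoped Classical in
/-- The number of cycle subgraphs of length `ℓ` of `G` containing the edge `{i, j}`:
each such (unoriented) cycle subgraph corresponds to exactly one closed walk of
length `ℓ` based at `i` that is a cycle and whose first step goes to `j`. -/
noncomputable def cycleEdgeCount (G : SimpleGraph V) [DecidableRel G.Adj] (ℓ : ℕ) (i j : V) : ℕ :=
  ((G.finsetWalkLength ℓ i i).filter fun w => w.IsCycle ∧ w.getVert 1 = j).card

open scoped Classical in
/-- The number of 4-cycle subgraphs of `G` in which `i` and `j` occupy diametrically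
opposite positions: each such (unoriented) cycle subgraph corresponds to exactly two
closed walks of length 4 based at `i` that are cycles with `j` as the second vertex. -/
noncomputable def cycleOppCount (G : SimpleGraph V) [DecidableRel G.Adj] (i j : V) : ℕ :=
  ((G.finsetWalkLength 4 i i).filter fun w => w.IsCycle ∧ w.getVert 2 = j).card / 2

/-- The number of 4-cliques of `G` containing the vertex `i`. -/
def k4Count (G : SimpleGraph V) [DecidableRel G.Adj] (i : V) : ℕ :=
  ((G.cliqueFinset 4).filter fun s => i ∈ s).card

/-- The number of 4-cliques of `G` containing both `i` and `j`. -/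
def k4PairCount (G : SimpleGraph V) [DecidableRel G.Adj] (i j : V) : ℕ :=
  ((G.cliqueFinset 4).filter fun s => i ∈ s ∧ j ∈ s).card

/-!
Every walk `i, k, m, j` counted by `(A·P₂)(i,j)` has `k ≠ j`, and it fails to be a path exactly
when `m = i` or `i = j`. The walks with `m = i` backtrack along an edge `ij`, with `k` one of the
other `deg i - 1` neighbours of `i`; those with `m ≠ i = j` run around a triangle through `i`,
in one of two directions.
-/

namespace SimpleGraph.Walk

variable {V : Type*} {G : SimpleGraph V}

lemma exists_eq_cons_cons_nil {u v : V} (w : G.Walk u v) (h : w.length = 2) :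
    ∃ (m : V) (h₁ : G.Adj u m) (h₂ : G.Adj m v), w = .cons h₁ (.cons h₂ .nil) := by
  rcases w with _ | ⟨h₁, _ | ⟨h₂, _ | ⟨_, _⟩⟩⟩
  all_goals first | exact ⟨_, h₁, h₂, rfl⟩ | simp at h

lemma exists_eq_cons_cons_cons_nil {u v : V} (w : G.Walk u v) (h : w.length = 3) :
    ∃ (k m : V) (h₁ : G.Adj u k) (h₂ : G.Adj k m) (h₃ : G.Adj m v),
      w = .cons h₁ (.cons h₂ (.cons h₃ .nil)) := by
  rcases w with _ | ⟨h₁, _ | ⟨h₂, _ | ⟨h₃, _ | ⟨_, _⟩⟩⟩⟩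
  all_goals first | exact ⟨_, _, h₁, h₂, h₃, rfl⟩ | simp at h

lemma isPath_cons_cons_nil_iff {u m v : V} (h₁ : G.Adj u m) (h₂ : G.Adj m v) :
    (cons h₁ (cons h₂ nil)).IsPath ↔ u ≠ v := by
  simp [cons_isPath_iff, h₁.ne, h₂.ne]

lemma isPath_cons_cons_cons_nil_iff {u k m v : V} (h₁ : G.Adj u k) (h₂ : G.Adj k m)
    (h₃ : G.Adj m v) : (cons h₁ (cons h₂ (cons h₃ nil))).IsPath ↔ k ≠ v ∧ m ≠ u ∧ u ≠ v := by
  simp [cons_isPath_iff, h₁.ne, h₂.ne, h₃.ne, ne_comm]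

end SimpleGraph.Walk

section Counting

variable (G : SimpleGraph V) [DecidableRel G.Adj]

def adjPathTwoPairs (i j : V) : Finset (V × V) :=
  {p | G.Adj i p.1 ∧ G.Adj p.1 p.2 ∧ G.Adj p.2 j ∧ p.1 ≠ j}

lemma pathCount_self {ℓ : ℕ} (hℓ : ℓ ≠ 0) (v : V) : pathCount G ℓ v v = 0 := by
  refine card_eq_zero.2 <| filter_eq_empty_iff.2 fun w hw hpath => hℓ ?_
  rw [← mem_finsetWalkLength_iff.1 hw, Walk.length_eq_zero_iff]
  exact Walk.isPath_iff_nil.1 hpath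

lemma pathCount_two (k j : V) :
    pathCount G 2 k j = #{m | G.Adj k m ∧ G.Adj m j ∧ k ≠ j} := by
  refine card_bij (fun w _ => w.getVert 1) ?_ ?_ ?_
  · intro w hw
    simp only [mem_filter, mem_finsetWalkLength_iff] at hw
    obtain ⟨m, h₁, h₂, rfl⟩ := w.exists_eq_cons_cons_nil hw.1
    simp [h₁, h₂, (Walk.isPath_cons_cons_nil_iff h₁ h₂).1 hw.2]
  · intro w₁ hw₁ w₂ hw₂ he
    simp only [mem_filter, mem_finsetWalkLength_iff] at hw₁ hw₂
    obtain ⟨m, h₁, h₂, rfl⟩ := w₁.exists_eq_cons_cons_nil hw₁.1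
    obtain ⟨m', _, _, rfl⟩ := w₂.exists_eq_cons_cons_nil hw₂.1
    obtain rfl : m = m' := by simpa using he
    rfl
  · intro m hm
    simp only [mem_filter, mem_univ, true_and] at hm
    obtain ⟨h₁, h₂, hkj⟩ := hm
    exact ⟨.cons h₁ (.cons h₂ .nil),
      mem_filter.2 ⟨mem_finsetWalkLength_iff.2 rfl, (Walk.isPath_cons_cons_nil_iff h₁ h₂).2 hkj⟩, rfl⟩

lemma pathCount_three_of_ne {i j : V} (hij : i ≠ j) :
    pathCount G 3 i j = #{p ∈ adjPathTwoPairs G i j | p.2 ≠ i} := by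
  refine card_bij (fun w _ => (w.getVert 1, w.getVert 2)) ?_ ?_ ?_
  · intro w hw
    simp only [mem_filter, mem_finsetWalkLength_iff] at hw
    obtain ⟨k, m, h₁, h₂, h₃, rfl⟩ := w.exists_eq_cons_cons_cons_nil hw.1
    simp [adjPathTwoPairs, h₁, h₂, h₃, (Walk.isPath_cons_cons_cons_nil_iff h₁ h₂ h₃).1 hw.2]
  · intro w₁ hw₁ w₂ hw₂ he
    simp only [mem_filter, mem_finsetWalkLength_iff] at hw₁ hw₂
    obtain ⟨k, m, h₁, h₂, h₃, rfl⟩ := w₁.exists_eq_cons_cons_cons_nil hw₁.1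
    obtain ⟨k', m', _, _, _, rfl⟩ := w₂.exists_eq_cons_cons_cons_nil hw₂.1
    obtain ⟨rfl, rfl⟩ : k = k' ∧ m = m' := by simpa using he
    rfl
  · intro p hp
    simp only [adjPathTwoPairs, mem_filter, mem_univ, true_and] at hp
    obtain ⟨⟨h₁, h₂, h₃, hpj⟩, hpi⟩ := hp
    exact ⟨.cons h₁ (.cons h₂ (.cons h₃ .nil)), mem_filter.2 ⟨mem_finsetWalkLength_iff.2 rfl,
      (Walk.isPath_cons_cons_cons_nil_iff h₁ h₂ h₃).2 ⟨hpj, hpi, hij⟩⟩, rfl⟩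

lemma sum_adjMatrix_mul_pathCount_two (i j : V) :
    ∑ k, G.adjMatrix ℤ i k * (pathCount G 2 k j : ℤ) = #(adjPathTwoPairs G i j) := by
  simp [adjPathTwoPairs, pathCount_two, card_filter, Fintype.sum_prod_type, adjMatrix_apply,
    ite_and]

lemma card_adjPathTwoPairs_filter_snd_eq (i j : V) :
    (#{p ∈ adjPathTwoPairs G i j | p.2 = i} : ℤ) = ((G.degree i : ℤ) - 1) * G.adjMatrix ℤ i j := by
  by_cases hij : G.Adj i j
  · have hcard : #{p ∈ adjPathTwoPairs G i j | p.2 = i} = #((G.neighborFinset i).erase j) := by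
      refine card_nbij' Prod.fst (fun k => (k, i)) ?_ ?_ ?_ ?_ <;>
        simp only [adjPathTwoPairs, filter_filter, coe_filter, coe_erase, mem_univ, true_and,
          Set.mem_ofPred_eq, Set.MapsTo, Set.LeftInvOn, Set.mem_sdiff, Set.mem_singleton_iff,
          mem_coe, mem_neighborFinset]
      · exact fun p hp => ⟨hp.1.1, hp.1.2.2.2⟩
      · exact fun k hk => ⟨⟨hk.1, hk.1.symm, hij, hk.2⟩, trivial⟩
      · exact fun p hp => Prod.ext rfl hp.2.symm
      · exact fun _ _ => trivial
    have hdeg : 1 ≤ G.degree i := G.degree_pos_iff_exists_adj i |>.2 ⟨j, hij⟩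
    rw [hcard, card_erase_of_mem (by simpa using hij), card_neighborFinset_eq_degree,
      Nat.cast_sub hdeg]
    simp [hij]
  · rw [adjMatrix_apply, if_neg hij, mul_zero, Nat.cast_eq_zero, card_eq_zero, filter_eq_empty_iff]
    rintro p hp rfl
    exact hij (mem_filter.1 hp).2.2.2.1

lemma card_adjPathTwoPairs_self (i : V) : #(adjPathTwoPairs G i i) = 2 * triCount G i := by
  have hfiber : ∀ s ∈ {s ∈ G.cliqueFinset 3 | i ∈ s},
      #{p ∈ adjPathTwoPairs G i i | insert i {p.1, p.2} = s} = 2 := by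
    intro s hs
    rw [mem_filter, mem_cliqueFinset_iff] at hs
    obtain ⟨x, y, hxy, hxy_eq⟩ := card_eq_two.1 (hs.1.erase_of_mem hs.2).card_eq
    obtain rfl : s = {i, x, y} := by rw [← insert_erase hs.2, hxy_eq]
    obtain ⟨hix, hiy, hxy'⟩ := is3Clique_triple_iff.1 hs.1
    rw [card_eq_two]
    refine ⟨(x, y), (y, x), by simp [hxy], ?_⟩
    ext ⟨k, m⟩
    simp only [adjPathTwoPairs, filter_filter, mem_filter, mem_univ, true_and, mem_insert,
      mem_singleton, Prod.mk.injEq]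
    constructor
    · rintro ⟨⟨hik, hkm, hmi, -⟩, he⟩
      have hk : k ∈ ({i, x, y} : Finset V) := he ▸ by simp
      have hm : m ∈ ({i, x, y} : Finset V) := he ▸ by simp
      simp only [mem_insert, mem_singleton] at hk hm
      grind [hik.ne, hkm.ne, hmi.ne]
    · rintro (⟨rfl, rfl⟩ | ⟨rfl, rfl⟩)
      · exact ⟨⟨hix, hxy', hiy.symm, hix.ne'⟩, rfl⟩
      · exact ⟨⟨hiy, hxy'.symm, hix.symm, hiy.ne'⟩, by rw [pair_comm]⟩
  rw [card_eq_sum_card_fiberwise (f := fun p : V × V => insert i {p.1, p.2})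
    (t := {s ∈ G.cliqueFinset 3 | i ∈ s}), sum_const_nat hfiber, triCount, mul_comm]
  intro p hp
  simp only [adjPathTwoPairs, coe_filter, mem_univ, true_and, Set.mem_ofPred_eq] at hp ⊢
  exact ⟨mem_cliqueFinset_iff.2 <| is3Clique_triple_iff.2 ⟨hp.1, hp.2.2.1.symm, hp.2.1⟩,
    mem_insert_self _ _⟩

lemma pathCount_three_eq (i j : V) :
    (pathCount G 3 i j : ℤ) =
      (∑ k, G.adjMatrix ℤ i k * (pathCount G 2 k j : ℤ))
        - ((G.degree i : ℤ) - 1) * G.adjMatrix ℤ i j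
        - 2 * (triCount G i : ℤ) * (if i = j then 1 else 0) := by
  rw [sum_adjMatrix_mul_pathCount_two]
  rcases eq_or_ne i j with rfl | hij
  · simp [pathCount_self, card_adjPathTwoPairs_self]
  · rw [pathCount_three_of_ne G hij, ← card_adjPathTwoPairs_filter_snd_eq,
      ← card_filter_add_card_filter_not (s := adjPathTwoPairs G i j) (fun p => p.2 = i)]
    simp [hij]

end Counting

/-- `P₃(i,j) = Σ_k A(i,k)·P₂(k,j) − (deg(i) − 1)·A(i,j) − 2·t(i)·[i=j]`;
in matrix form, `P₃ = A·P₂ − diag(p₁ − 1)·A − 2·diag(c₃)`. -/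
theorem stmt10 (G : SimpleGraph V) [DecidableRel G.Adj] :
    (∀ i j : V, (pathCount G 3 i j : ℤ) =
      (∑ k, G.adjMatrix ℤ i k * (pathCount G 2 k j : ℤ))
        - ((G.degree i : ℤ) - 1) * G.adjMatrix ℤ i j
        - 2 * (triCount G i : ℤ) * (if i = j then 1 else 0)) ∧
    (Matrix.of fun i j => (pathCount G 3 i j : ℤ)) =
      G.adjMatrix ℤ * (Matrix.of fun i j => (pathCount G 2 i j : ℤ))
        - Matrix.diagonal (fun i => (G.degree i : ℤ) - 1) * G.adjMatrix ℤ
        - 2 * Matrix.diagonal (fun i => (triCount G i : ℤ)) := by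
  refine ⟨pathCount_three_eq G, ?_⟩
  ext i j
  rw [of_apply, pathCount_three_eq, Matrix.sub_apply, Matrix.sub_apply, mul_apply, diagonal_mul,
    ← diagonal_ofNat, diagonal_mul_diagonal, diagonal_apply]
  simp only [of_apply, mul_ite, mul_one, mul_zero]
end

section
/- For every finite simple graph G and every vertex v, the number of dipper subgraphs of G in which v occupies a base position equals Σ_{j : j adjacent to v} C₃(v,j)·(deg(j) − 2), where C₃(v,j) is the number of triangles of G containing both v and j. -/
open Finset Matrix SimpleGraph

variable {V : Type*} [Fintype V] [DecidableEq V]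

/-!
A dipper with base vertex `v` is determined by its center `a`, a neighbour of `v`; its other
base vertex `c`, which completes `v a` to a triangle (`C₃(v,a)` choices); and its pendant `w`,
a neighbour of `a` other than `v` and `c` (`deg a - 2` choices, independently of `c`).
-/

namespace Finset

theorem card_filter_prod_eq_sum {α β : Type*} [Fintype α] [Fintype β] (P : β → Prop)
    (Q : β → α → Prop) [DecidablePred P] [∀ c, DecidablePred (Q c)] :
    #{p : α × β | P p.2 ∧ Q p.2 p.1} = ∑ c ∈ {c | P c}, #{w | Q c w} := by
  rw [card_filter, Fintype.sum_prod_type_right, sum_filter]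
  refine sum_congr rfl fun c _ => ?_
  split_ifs with h
  · simp only [h, true_and, card_filter]
  · simp [h]

end Finset

namespace SimpleGraph

variable {G : SimpleGraph V} [DecidableRel G.Adj]

theorem card_filter_isNClique_three_eq_triPairCount {v a : V} (hva : v ≠ a) :
    #{c | G.IsNClique 3 ({v, a, c} : Finset V)} = triPairCount G v a := by
  refine card_nbij (fun c => {v, a, c}) (fun c hc => ?_) (fun c₁ hc₁ c₂ _ h => ?_)
    fun s hs => ?_
  · simp_all
  · simp only [coe_filter, mem_univ, true_and, Set.mem_ofPred_eq, is3Clique_triple_iff] at hc₁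
    have : c₁ ∈ ({v, a, c₂} : Finset V) := by
      rw [← show ({v, a, c₁} : Finset V) = {v, a, c₂} from h]; simp
    simp only [mem_insert, mem_singleton] at this
    grind [Adj.ne]
  · simp only [coe_filter, mem_cliqueFinset_iff, Set.mem_ofPred_eq] at hs
    obtain ⟨hs, hv, ha⟩ := hs
    have hsub : {v, a} ⊆ s := by simp [insert_subset_iff, hv, ha]
    obtain ⟨c, hc⟩ : ∃ c, s \ {v, a} = {c} := card_eq_one.1 <| by
      rw [card_sdiff_of_subset hsub, hs.card_eq, card_pair hva]
    obtain rfl : s = {v, a, c} := by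
      rw [← sdiff_union_of_subset hsub, hc, singleton_union, insert_comm c, pair_comm c a]
    exact ⟨c, by simpa using hs, rfl⟩

theorem card_filter_adj_notMem_eq_degree_sub_two {v a c : V}
    (h : G.IsNClique 3 ({v, a, c} : Finset V)) :
    (#{w | G.Adj a w ∧ w ∉ ({v, a, c} : Finset V)} : ℤ) = G.degree a - 2 := by
  rw [is3Clique_triple_iff] at h
  have hsub : ({v, c} : Finset V) ⊆ G.neighborFinset a := by
    simp [insert_subset_iff, h.1.symm, h.2.2]
  have : ({w | G.Adj a w ∧ w ∉ ({v, a, c} : Finset V)} : Finset V) =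
      G.neighborFinset a \ {v, c} := by
    ext w
    simp only [mem_filter, mem_univ, true_and, mem_sdiff, mem_neighborFinset, mem_insert,
      mem_singleton]
    grind [Adj.ne]
  rw [this, card_sdiff_of_subset hsub, card_pair h.2.1.ne, ← card_neighborFinset_eq_degree,
    Nat.cast_sub (card_pair h.2.1.ne ▸ card_le_card hsub)]
  norm_num

theorem card_dippers_with_center {v a : V} (hva : G.Adj v a) :
    (#{p : V × V | G.IsNClique 3 {v, a, p.2} ∧ G.Adj a p.1 ∧
        p.1 ∉ ({v, a, p.2} : Finset V)} : ℤ) = triPairCount G v a * (G.degree a - 2) :=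
  calc _ = ∑ c ∈ {c | G.IsNClique 3 {v, a, c}},
        (#{w | G.Adj a w ∧ w ∉ ({v, a, c} : Finset V)} : ℤ) := by
          rw [card_filter_prod_eq_sum (fun c => G.IsNClique 3 {v, a, c})
            fun c w => G.Adj a w ∧ w ∉ ({v, a, c} : Finset V), Nat.cast_sum]
    _ = ∑ c ∈ {c | G.IsNClique 3 {v, a, c}}, ((G.degree a : ℤ) - 2) :=
          sum_congr rfl fun c hc => card_filter_adj_notMem_eq_degree_sub_two (mem_filter.1 hc).2
    _ = _ := by rw [sum_const, card_filter_isNClique_three_eq_triPairCount hva.ne, nsmul_eq_mul]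

end SimpleGraph

/-- A dipper with base vertex `v` is encoded by `t = (a, w, c)`: center `a = t.1`, pendant
`w = t.2.1` and other base vertex `c = t.2.2`. -/
theorem stmt15 (G : SimpleGraph V) [DecidableRel G.Adj] (v : V) :
    ((Finset.univ.filter fun t : V × V × V =>
        G.IsNClique 3 {v, t.1, t.2.2} ∧ G.Adj t.1 t.2.1 ∧
          t.2.1 ∉ ({v, t.1, t.2.2} : Finset V)).card : ℤ) =
      ∑ j ∈ G.neighborFinset v, (triPairCount G v j : ℤ) * ((G.degree j : ℤ) - 2) := by
  rw [card_filter, Fintype.sum_prod_type, neighborFinset_eq_filter, sum_filter]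
  simp only [← card_filter]
  push_cast
  refine sum_congr rfl fun a _ => ?_
  split_ifs with hva
  · exact card_dippers_with_center hva
  · simp [is3Clique_triple_iff, hva]
end

section
/- For every finite simple graph G and every vertex v, the number of diamond subgraphs of G in which v occupies an off-cord position equals (1/2)·Σ_{(a,b) : a adjacent to v, b adjacent to v, a adjacent to b} (C₃(a,b) − 1), where the sum is over ordered pairs (a,b) and C₃(a,b) is the number of triangles of G containing both a and b. -/
open Finset Matrix SimpleGraph

variable {V : Type*} [Fintype V] [DecidableEq V]

/-!
A diamond with off-cord vertex `v` is determined by its cord `{a, b}`, which spans a triangle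
with `v`, together with its second off-cord vertex `w`, which may be the apex of any of the
`C₃(a, b)` triangles over `{a, b}` except the one with apex `v`. Summing over ordered pairs
`(a, b)` counts every cord twice.
-/

theorem Finset.sum_offDiag_pair_eq_two_nsmul {α M : Type*} [DecidableEq α] [AddCommMonoid M]
    (s : Finset α) (f : Finset α → M) :
    ∑ x ∈ s.offDiag, f {x.1, x.2} = 2 • ∑ t ∈ s.powersetCard 2, f t := by
  have hmaps : ∀ x ∈ s.offDiag, ({x.1, x.2} : Finset α) ∈ s.powersetCard 2 := by
    intro x hx
    obtain ⟨h1, h2, hne⟩ := mem_offDiag.1 hx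
    exact mem_powersetCard.2 ⟨insert_subset h1 (singleton_subset_iff.2 h2), card_pair hne⟩
  rw [← sum_fiberwise_of_maps_to' hmaps, smul_sum]
  refine sum_congr rfl fun t ht => ?_
  obtain ⟨hts, hcard⟩ := mem_powersetCard.1 ht
  obtain ⟨a, b, hab, rfl⟩ := card_eq_two.1 hcard
  have hfiber : {x ∈ s.offDiag | ({x.1, x.2} : Finset α) = {a, b}} = {(a, b), (b, a)} := by
    ext ⟨x, y⟩
    simp only [mem_filter, mem_offDiag, mem_insert, mem_singleton, Prod.mk.injEq]
    constructor
    · rintro ⟨-, h⟩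
      exact Set.pair_eq_pair_iff.1 (by simpa using congrArg (fun t : Finset α => (t : Set α)) h)
    · rintro (⟨rfl, rfl⟩ | ⟨rfl, rfl⟩)
      · exact ⟨⟨hts (by simp), hts (by simp), hab⟩, rfl⟩
      · exact ⟨⟨hts (by simp), hts (by simp), hab.symm⟩, pair_comm _ _⟩
  rw [hfiber, sum_const, card_pair (by simp [hab])]

theorem Finset.card_filter_card_fst_eq_and {α β : Type*} [Fintype α] [Fintype β]
    (k : ℕ) (Q : Finset α → β → Prop) [∀ t, DecidablePred (Q t)] :
    #{p : Finset α × β | #p.1 = k ∧ Q p.1 p.2} = ∑ t ∈ univ.powersetCard k, #{b | Q t b} := by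
  rw [card_filter, Fintype.sum_prod_type, ← sum_subset (subset_univ (univ.powersetCard k))]
  · refine sum_congr rfl fun t ht => ?_
    simp only [mem_powersetCard_univ.1 ht, true_and, card_filter]
  · intro t _ ht
    simp [mem_powersetCard_univ.not.1 ht]

namespace SimpleGraph

variable (G : SimpleGraph V) [DecidableRel G.Adj]

theorem triPairCount_eq_card_filter_isNClique {a b : V} (hab : a ≠ b) :
    triPairCount G a b = #{w | G.IsNClique 3 {w, a, b}} := by
  symm
  refine card_bij (fun w _ => {w, a, b}) ?_ ?_ ?_
  · intro w hw
    simp_all [mem_cliqueFinset_iff]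
  · intro w hw w' hw' h
    simp only [mem_filter, mem_univ, true_and, is3Clique_triple_iff] at hw hw'
    have : w ∈ ({w', a, b} : Finset V) := h ▸ mem_insert_self w _
    simp only [mem_insert, mem_singleton] at this
    rcases this with h | h | h
    · exact h
    · exact absurd h hw.1.ne
    · exact absurd h hw.2.1.ne
  · intro s hs
    obtain ⟨hcl, ha, hb⟩ := by simpa only [mem_filter, mem_cliqueFinset_iff] using hs
    have hsub : ({a, b} : Finset V) ⊆ s := insert_subset ha (singleton_subset_iff.2 hb)
    obtain ⟨w, hw⟩ := card_eq_one.1 <| show #(s \ {a, b}) = 1 by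
      rw [card_sdiff_of_subset hsub, hcl.card_eq, card_pair hab]
    have hs : s = {w, a, b} := by rw [insert_eq, ← hw, sdiff_union_of_subset hsub]
    exact ⟨w, by simpa [← hs] using hcl, hs.symm⟩

theorem card_filter_isNClique_ne_add_one {v a b : V} (h : G.IsNClique 3 {v, a, b}) :
    #{w | G.IsNClique 3 {w, a, b} ∧ w ≠ v} + 1 = triPairCount G a b := by
  rw [triPairCount_eq_card_filter_isNClique G (is3Clique_triple_iff.1 h).2.2.ne, ← filter_filter,
    filter_ne', card_erase_add_one (by simpa using h)]

theorem ite_triPairCount_sub_one_eq_card {v a b : V} :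
    (if G.Adj v a ∧ G.Adj v b ∧ G.Adj a b then (triPairCount G a b : ℚ) - 1 else 0) =
      #{w | G.IsNClique 3 {v, a, b} ∧ G.IsNClique 3 {w, a, b} ∧ w ≠ v} := by
  by_cases h : G.IsNClique 3 {v, a, b}
  · rw [if_pos (is3Clique_triple_iff.1 h), ← card_filter_isNClique_ne_add_one G h]
    simp only [h, true_and]
    push_cast
    ring
  · rw [if_neg (mt is3Clique_triple_iff.2 h)]
    simp [h]

end SimpleGraph

/-- A diamond with off-cord vertex `v` is encoded by its cord `p.1` and its other off-cord
vertex `p.2`. -/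
theorem stmt17 (G : SimpleGraph V) [DecidableRel G.Adj] (v : V) :
    ((Finset.univ.filter fun p : Finset V × V =>
        p.1.card = 2 ∧ G.IsNClique 3 (insert v p.1) ∧ G.IsNClique 3 (insert p.2 p.1) ∧
          p.2 ≠ v).card : ℚ) =
      (1 / 2) * ∑ a, ∑ b,
        if G.Adj v a ∧ G.Adj v b ∧ G.Adj a b then (triPairCount G a b : ℚ) - 1 else 0 := by
  set term : V × V → ℚ := fun x =>
    if G.Adj v x.1 ∧ G.Adj v x.2 ∧ G.Adj x.1 x.2 then (triPairCount G x.1 x.2 : ℚ) - 1 else 0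
  have hdiag : ∀ x ∈ (univ : Finset (V × V)), x ∉ univ.offDiag → term x = 0 := by
    intro x _ hx
    have : x.1 = x.2 := by simpa using hx
    simp [term, this]
  calc _ = ((∑ t ∈ univ.powersetCard 2,
          #{w | G.IsNClique 3 (insert v t) ∧ G.IsNClique 3 (insert w t) ∧ w ≠ v} : ℕ) : ℚ) :=
        congrArg _ (card_filter_card_fst_eq_and 2 _)
    _ = 1 / 2 * ∑ x ∈ univ.offDiag,
          (#{w | G.IsNClique 3 {v, x.1, x.2} ∧ G.IsNClique 3 {w, x.1, x.2} ∧ w ≠ v} : ℚ) := by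
        rw [sum_offDiag_pair_eq_two_nsmul univ fun t =>
          (#{w | G.IsNClique 3 (insert v t) ∧ G.IsNClique 3 (insert w t) ∧ w ≠ v} : ℚ)]
        push_cast
        ring
    _ = 1 / 2 * ∑ x ∈ univ.offDiag, term x := by
        rw [sum_congr rfl fun x _ => G.ite_triPairCount_sub_one_eq_card]
    _ = _ := by
        rw [sum_subset (subset_univ _) hdiag, Fintype.sum_prod_type]
end

section
/- For every finite simple graph G and every vertex v, the number of diamond subgraphs of G in which v occupies an on-cord position equals Σ_{j : j adjacent to v} P₂(v,j)·(P₂(v,j) − 1)/2, where P₂(v,j) is the number of common neighbors of v and j. -/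
open Finset Matrix SimpleGraph

variable {V : Type*} [Fintype V] [DecidableEq V]

/-! Grouping diamonds by their second cord vertex `j`, those over `j` are the 2-subsets of the
common neighbours of `v` and `j`; and these number `P₂(v,j)` because a walk of length 2 between
distinct vertices is a path. -/

theorem SimpleGraph.Walk.isPath_of_length_eq_two {α : Type*} {G : SimpleGraph α} {u v : α}
    (huv : u ≠ v) (p : G.Walk u v) (hp : p.length = 2) : p.IsPath := by
  match p, hp with
  | .cons hux (.cons hxv .nil), _ => simp [huv, hux.ne, hxv.ne]

theorem pathCount_two_of_ne (G : SimpleGraph V) [DecidableRel G.Adj] {u v : V} (huv : u ≠ v) :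
    pathCount G 2 u v = Fintype.card (G.commonNeighbors u v) := by
  have hpaths : {p ∈ G.finsetWalkLength 2 u v | p.IsPath} = G.finsetWalkLength 2 u v :=
    filter_true_of_mem fun p hp =>
      p.isPath_of_length_eq_two huv (G.mem_finsetWalkLength_iff.mp hp)
  rw [pathCount, hpaths, ← card_set_walk_length_eq]
  exact Fintype.card_congr (G.walkLengthTwoEquivCommonNeighbors u v)

theorem Finset.card_filter_prod_powersetCard {α β : Type*} [Fintype α] [DecidableEq α]
    [Fintype β] [DecidableEq β] (s : Finset α) (t : α → Finset β) (k : ℕ) :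
    #{p : α × Finset β | p.1 ∈ s ∧ #p.2 = k ∧ p.2 ⊆ t p.1} = ∑ a ∈ s, (#(t a)).choose k := by
  simp_rw [← card_powersetCard, ← card_sigma]
  refine card_equiv (Equiv.sigmaEquivProd α (Finset β)).symm fun p => ?_
  simp [mem_powersetCard, and_comm]

/-- A diamond with on-cord vertex `v` is encoded by the other cord vertex `p.1` and the off-cord
pair `p.2`. -/
theorem stmt18 (G : SimpleGraph V) [DecidableRel G.Adj] (v : V) :
    ((Finset.univ.filter fun p : V × Finset V =>
        G.Adj v p.1 ∧ p.2.card = 2 ∧ ∀ x ∈ p.2, G.Adj v x ∧ G.Adj p.1 x).card : ℚ) =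
      ∑ j ∈ G.neighborFinset v,
        (pathCount G 2 v j : ℚ) * ((pathCount G 2 v j : ℚ) - 1) / 2 := by
  have hdiamonds : (Finset.univ.filter fun p : V × Finset V =>
        G.Adj v p.1 ∧ p.2.card = 2 ∧ ∀ x ∈ p.2, G.Adj v x ∧ G.Adj p.1 x) =
      ({p : V × Finset V | p.1 ∈ G.neighborFinset v ∧ #p.2 = 2 ∧
        p.2 ⊆ (G.commonNeighbors v p.1).toFinset} : Finset _) := by
    ext p
    simp [subset_iff, mem_commonNeighbors]
  rw [hdiamonds, card_filter_prod_powersetCard _ (fun j => (G.commonNeighbors v j).toFinset),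
    Nat.cast_sum]
  refine sum_congr rfl fun j hj => ?_
  rw [pathCount_two_of_ne G (G.ne_of_adj ((G.mem_neighborFinset v j).mp hj)),
    Set.toFinset_card, Nat.cast_choose_two]
end
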